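/- arXiv:2604.26074 — 9 statements merged into one kernel-verified Lean document; each statement's English description precedes it below -/
import Mathlib

section
/- Suppose R·Σ_{i∈F} C_i ≤ Σ_{i∈F_mem} C_i·B_h/(B_h+B_g). Then every feasible allocation x with x_i ≤ B_h/(B_h+B_g) for all i ∈ F_mem and x_i = 0 for all i ∈ F_comp has objective value L(x) = (Σ_{i∈F_mem} C_i − R·Σ_{i∈F} C_i)/B_g + Σ_{i∈F_comp} C_i/B_i; in particular all such allocations have the same objective value. -/
open Finset

/-- Offloading model: a finite nonempty set of operations `F` partitioned into
memory-bound operations `Fmem` and compute-bound operations `Fcomp`; host-GPU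
interconnect bandwidth `Bh > 0`, GPU memory bandwidth `Bg > 0`, per-operation
compute bandwidths `Bi i ≥ Bh` (for compute-bound ops) and data sizes `Cd i > 0`. -/
structure OffloadModel (ι : Type*) [DecidableEq ι] where
  F : Finset ι
  Fmem : Finset ι
  Fcomp : Finset ι
  Bh : ℝ
  Bg : ℝ
  Bi : ι → ℝ
  Cd : ι → ℝ
  hF : F.Nonempty
  hpart : Fmem ∪ Fcomp = F
  hdisj : Disjoint Fmem Fcomp
  hBh : 0 < Bh
  hBg : 0 < Bg
  hBi : ∀ i ∈ Fcomp, Bh ≤ Bi i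
  hC : ∀ i ∈ F, 0 < Cd i

variable {ι : Type*} [DecidableEq ι]

/-- Latency of operation `i` under per-operation offloading ratio `x`. -/
noncomputable def OffloadModel.T (M : OffloadModel ι) (i : ι) (x : ℝ) : ℝ :=
  if i ∈ M.Fmem then M.Cd i * max (x / M.Bh) ((1 - x) / M.Bg)
  else M.Cd i * max (1 / M.Bi i) (x / M.Bh)

/-- Turning point of operation `i`. -/
noncomputable def OffloadModel.turning (M : OffloadModel ι) (i : ι) : ℝ :=
  if i ∈ M.Fmem then M.Bh / (M.Bh + M.Bg) else M.Bh / M.Bi i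

/-- An allocation `x` is feasible for global offloading ratio `R`. -/
def OffloadModel.Feasible (M : OffloadModel ι) (R : ℝ) (x : ι → ℝ) : Prop :=
  (∀ i ∈ M.F, 0 ≤ x i ∧ x i ≤ 1) ∧
  ∑ i ∈ M.F, M.Cd i * x i = R * ∑ i ∈ M.F, M.Cd i

/-- The objective: total latency of an allocation. -/
noncomputable def OffloadModel.L (M : OffloadModel ι) (x : ι → ℝ) : ℝ :=
  ∑ i ∈ M.F, M.T i (x i)

/-- A feasible allocation is optimal if it minimizes the objective among all
feasible allocations. -/
def OffloadModel.Optimal (M : OffloadModel ι) (R : ℝ) (x : ι → ℝ) : Prop :=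
  M.Feasible R x ∧ ∀ y, M.Feasible R y → M.L x ≤ M.L y

/-- Phase 1 constancy: if the offloading budget can be absorbed by the memory-bound
operations below their turning points, then every feasible allocation which keeps
memory-bound ops below their turning points and offloads nothing from compute-bound
ops has objective value
`(∑_{Fmem} C i − R ∑_F C i)/Bg + ∑_{Fcomp} C i / Bi i`. -/
theorem stmt7 (M : OffloadModel ι) (R : ℝ) (hR0 : 0 ≤ R) (hR1 : R ≤ 1)
    (hbudget : R * ∑ i ∈ M.F, M.Cd i ≤
      ∑ i ∈ M.Fmem, M.Cd i * (M.Bh / (M.Bh + M.Bg)))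
    (x : ι → ℝ) (hx : M.Feasible R x)
    (hmem : ∀ i ∈ M.Fmem, x i ≤ M.Bh / (M.Bh + M.Bg))
    (hcomp : ∀ i ∈ M.Fcomp, x i = 0) :
    M.L x = (∑ i ∈ M.Fmem, M.Cd i - R * ∑ i ∈ M.F, M.Cd i) / M.Bg
      + ∑ i ∈ M.Fcomp, M.Cd i / M.Bi i := by
  obtain ⟨hbnd, hsum⟩ := hx
  have hsplit : ∀ (g : ι → ℝ), ∑ i ∈ M.F, g i = ∑ i ∈ M.Fmem, g i + ∑ i ∈ M.Fcomp, g i := by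
    intro g
    rw [← M.hpart, Finset.sum_union M.hdisj]
  -- T on Fmem
  have hTm : ∀ i ∈ M.Fmem, M.T i (x i) = M.Cd i * ((1 - x i) / M.Bg) := by
    intro i hi
    have hiF : i ∈ M.F := by rw [← M.hpart]; exact Finset.mem_union_left _ hi
    have h0 : 0 ≤ x i := (hbnd i hiF).1
    have hle : x i / M.Bh ≤ (1 - x i) / M.Bg := by
      rw [div_le_div_iff₀ M.hBh M.hBg]
      have := hmem i hi
      rw [le_div_iff₀ (by linarith [M.hBh, M.hBg] : (0:ℝ) < M.Bh + M.Bg)] at this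
      nlinarith
    simp [OffloadModel.T, hi, max_eq_right hle]
  have hTc : ∀ i ∈ M.Fcomp, M.T i (x i) = M.Cd i / M.Bi i := by
    intro i hi
    have hBi : 0 < M.Bi i := lt_of_lt_of_le M.hBh (M.hBi i hi)
    have hnm : i ∉ M.Fmem := Finset.disjoint_right.mp M.hdisj hi
    have h0 : x i = 0 := hcomp i hi
    have : max (1 / M.Bi i) (x i / M.Bh) = 1 / M.Bi i := by
      rw [h0, zero_div]
      exact max_eq_left (by positivity)
    rw [OffloadModel.T, if_neg hnm, this, mul_one_div]
  have hxsum : ∑ i ∈ M.Fmem, M.Cd i * x i = R * ∑ i ∈ M.F, M.Cd i := by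
    rw [← hsum, hsplit (fun i => M.Cd i * x i)]
    have : ∑ i ∈ M.Fcomp, M.Cd i * x i = 0 :=
      Finset.sum_eq_zero fun i hi => by rw [hcomp i hi, mul_zero]
    rw [this, add_zero]
  rw [OffloadModel.L, hsplit (fun i => M.T i (x i)),
    Finset.sum_congr rfl hTm, Finset.sum_congr rfl hTc]
  have : ∑ i ∈ M.Fmem, M.Cd i * ((1 - x i) / M.Bg)
      = (∑ i ∈ M.Fmem, M.Cd i - ∑ i ∈ M.Fmem, M.Cd i * x i) / M.Bg := by
    rw [sub_div, Finset.sum_div, Finset.sum_div, ← Finset.sum_sub_distrib]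
    refine Finset.sum_congr rfl fun i hi => ?_
    field_simp
  rw [this, hxsum]
end

section
/- (Theorem 1, optimality part) Suppose R·Σ_{i∈F} C_i ≤ Σ_{i∈F_mem} C_i·B_h/(B_h+B_g). Then every feasible allocation x with x_i ≤ B_h/(B_h+B_g) for all i ∈ F_mem and x_i = 0 for all i ∈ F_comp is optimal, i.e. L(x) ≤ L(y) for every feasible allocation y. -/
open Finset

variable {ι : Type*} [DecidableEq ι]

/-- Theorem 1 (optimality part): if the offloading budget can be absorbed by the
memory-bound operations below their turning points, then every feasible allocation
which keeps memory-bound ops below their turning points and offloads nothing from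
compute-bound ops is optimal. -/
theorem stmt8 (M : OffloadModel ι) (R : ℝ) (hR0 : 0 ≤ R) (hR1 : R ≤ 1)
    (hbudget : R * ∑ i ∈ M.F, M.Cd i ≤
      ∑ i ∈ M.Fmem, M.Cd i * (M.Bh / (M.Bh + M.Bg)))
    (x : ι → ℝ) (hx : M.Feasible R x)
    (hmem : ∀ i ∈ M.Fmem, x i ≤ M.Bh / (M.Bh + M.Bg))
    (hcomp : ∀ i ∈ M.Fcomp, x i = 0) :
    ∀ y, M.Feasible R y → M.L x ≤ M.L y := by
  intro y hy
  -- per-operation linear lower bound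
  set g : (ι → ℝ) → ι → ℝ := fun z i =>
    (if i ∈ M.Fmem then M.Cd i / M.Bg else M.Cd i / M.Bi i) - M.Cd i * z i / M.Bg with hg
  have hcompmem : ∀ i ∈ M.F, i ∉ M.Fmem → i ∈ M.Fcomp := by
    intro i hiF hin
    have : i ∈ M.Fmem ∪ M.Fcomp := M.hpart ▸ hiF
    rcases Finset.mem_union.mp this with h | h
    · exact absurd h hin
    · exact h
  -- L x equals the sum of g x
  have hLx : M.L x = ∑ i ∈ M.F, g x i := by
    unfold OffloadModel.L
    refine Finset.sum_congr rfl fun i hiF => ?_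
    unfold OffloadModel.T
    have hBhg : (0:ℝ) < M.Bh + M.Bg := add_pos M.hBh M.hBg
    by_cases hi : i ∈ M.Fmem
    · rw [if_pos hi]
      have hx1 : x i / M.Bh ≤ (1 - x i) / M.Bg := by
        have hxle := hmem i hi
        rw [div_le_div_iff₀ M.hBh M.hBg]
        have h1 : x i * (M.Bh + M.Bg) ≤ M.Bh := by
          have := mul_le_mul_of_nonneg_right hxle hBhg.le
          rwa [div_mul_cancel₀ _ hBhg.ne'] at this
        nlinarith
      rw [max_eq_right hx1]
      simp only [hg, if_pos hi]
      field_simp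
    · have hic := hcompmem i hiF hi
      have hBi : 0 < M.Bi i := lt_of_lt_of_le M.hBh (M.hBi i hic)
      have hx0 : x i = 0 := hcomp i hic
      rw [if_neg hi, hx0, zero_div, max_eq_left (by positivity)]
      simp only [hg, if_neg hi, hx0]
      ring
  -- g y lower-bounds T at y pointwise
  have hLy : ∑ i ∈ M.F, g y i ≤ M.L y := by
    unfold OffloadModel.L
    refine Finset.sum_le_sum fun i hiF => ?_
    have hCi := M.hC i hiF
    have hyi := (hy.1 i hiF).1
    unfold OffloadModel.T
    by_cases hi : i ∈ M.Fmem
    · rw [if_pos hi]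
      simp only [hg, if_pos hi]
      have : (1 - y i) / M.Bg ≤ max (y i / M.Bh) ((1 - y i) / M.Bg) := le_max_right _ _
      calc M.Cd i / M.Bg - M.Cd i * y i / M.Bg = M.Cd i * ((1 - y i) / M.Bg) := by
            field_simp
        _ ≤ M.Cd i * max (y i / M.Bh) ((1 - y i) / M.Bg) :=
            mul_le_mul_of_nonneg_left this hCi.le
    · have hic := hcompmem i hiF hi
      have hBi : 0 < M.Bi i := lt_of_lt_of_le M.hBh (M.hBi i hic)
      rw [if_neg hi]
      simp only [hg, if_neg hi]
      have h1 : M.Cd i / M.Bi i ≤ M.Cd i * max (1 / M.Bi i) (y i / M.Bh) := by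
        calc M.Cd i / M.Bi i = M.Cd i * (1 / M.Bi i) := by ring
          _ ≤ _ := mul_le_mul_of_nonneg_left (le_max_left _ _) hCi.le
      have h2 : 0 ≤ M.Cd i * y i / M.Bg := div_nonneg (mul_nonneg hCi.le hyi) M.hBg.le
      linarith
  -- the two lower-bound sums agree since both allocations have the same total
  have hsum : ∑ i ∈ M.F, g x i = ∑ i ∈ M.F, g y i := by
    simp only [hg, Finset.sum_sub_distrib]
    congr 1
    rw [← Finset.sum_div, ← Finset.sum_div, hx.2, hy.2]
  rw [hLx, hsum]
  exact hLy
end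

section
/- (Exchange lemma, compute-to-memory) Let x be a feasible allocation for ratio R, and suppose there exist a compute-bound operation j ∈ F_comp with x_j > 0 and a memory-bound operation k ∈ F_mem (k ≠ j) with x_k < B_h/(B_h+B_g). Then x is not optimal: there exists a feasible allocation x' for the same ratio R with L(x') < L(x). -/
open Finset

variable {ι : Type*} [DecidableEq ι]

/-!
Shift a small amount of data from the compute-bound `j` to the memory-bound `k`. This keeps
the total offloaded data fixed; the latency of `j` cannot grow when its ratio drops, and below
its turning point `k` is limited by GPU memory bandwidth, so its latency strictly drops as its
ratio grows.
-/

open Function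

theorem Finset.sum_apply_update_update {α M : Type*} [AddCommGroup M]
    {s : Finset ι} {j k : ι} (hj : j ∈ s) (hk : k ∈ s) (hjk : k ≠ j)
    (f : ι → α → M) (x : ι → α) (a b : α) :
    ∑ i ∈ s, f i (update (update x j a) k b i) =
      ∑ i ∈ s, f i (x i) + (f j a - f j (x j)) + (f k b - f k (x k)) := by
  have hdiff : ∑ i ∈ s, (f i (update (update x j a) k b i) - f i (x i)) =
      (f j a - f j (x j)) + (f k b - f k (x k)) := by
    rw [sum_eq_add_of_mem j k hj hk hjk.symm]
    · simp [update_of_ne hjk.symm]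
    · rintro i - ⟨hij, hik⟩
      simp [update_of_ne hij, update_of_ne hik]
  rw [add_assoc, ← hdiff, sum_sub_distrib]
  abel

namespace OffloadModel

variable (M : OffloadModel ι)

theorem mem_F_of_mem_Fmem {i : ι} (hi : i ∈ M.Fmem) : i ∈ M.F :=
  M.hpart ▸ mem_union_left _ hi

theorem mem_F_of_mem_Fcomp {i : ι} (hi : i ∈ M.Fcomp) : i ∈ M.F :=
  M.hpart ▸ mem_union_right _ hi

theorem notMem_Fmem_of_mem_Fcomp {i : ι} (hi : i ∈ M.Fcomp) : i ∉ M.Fmem :=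
  fun h => disjoint_left.mp M.hdisj h hi

/-- `d` is an amount of data, not a ratio, so that `∑ Cd i * x i` is preserved. -/
noncomputable def transfer (x : ι → ℝ) (j k : ι) (d : ℝ) : ι → ℝ :=
  update (update x j (x j - d / M.Cd j)) k (x k + d / M.Cd k)

theorem L_transfer {x : ι → ℝ} {j k : ι} (hj : j ∈ M.F) (hk : k ∈ M.F) (hjk : k ≠ j) (d : ℝ) :
    M.L (M.transfer x j k d) = M.L x + (M.T j (x j - d / M.Cd j) - M.T j (x j)) +
      (M.T k (x k + d / M.Cd k) - M.T k (x k)) :=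
  sum_apply_update_update hj hk hjk M.T x _ _

theorem feasible_transfer {R : ℝ} {x : ι → ℝ} (hx : M.Feasible R x) {j k : ι}
    (hj : j ∈ M.F) (hk : k ∈ M.F) (hjk : k ≠ j) {d : ℝ} (hd : 0 ≤ d)
    (hdj : d ≤ M.Cd j * x j) (hdk : d ≤ M.Cd k * (1 - x k)) :
    M.Feasible R (M.transfer x j k d) := by
  obtain ⟨hbounds, hsum⟩ := hx
  have hCj := M.hC j hj
  have hCk := M.hC k hk
  refine ⟨fun i hi => ?_, ?_⟩
  · have hj' : d / M.Cd j ≤ x j := by rwa [div_le_iff₀' hCj]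
    have hk' : d / M.Cd k ≤ 1 - x k := by rwa [div_le_iff₀' hCk]
    have hdj0 : 0 ≤ d / M.Cd j := by positivity
    have hdk0 : 0 ≤ d / M.Cd k := by positivity
    simp only [transfer, update_apply]
    split_ifs with hik hij
    · subst hik; constructor <;> linarith [hbounds i hi]
    · subst hij; constructor <;> linarith [hbounds i hi]
    · exact hbounds i hi
  · rw [transfer, sum_apply_update_update hj hk hjk (fun i v => M.Cd i * v), hsum]
    field_simp
    ring

theorem T_of_mem_Fmem_of_le {k : ι} (hk : k ∈ M.Fmem) {v : ℝ}
    (hv : v ≤ M.Bh / (M.Bh + M.Bg)) : M.T k v = M.Cd k * ((1 - v) / M.Bg) := by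
  have hBh := M.hBh
  have hBg := M.hBg
  have hv' : v * (M.Bh + M.Bg) ≤ M.Bh := (le_div_iff₀ (by linarith)).mp hv
  rw [T, if_pos hk, max_eq_right]
  rw [div_le_div_iff₀ hBh hBg]
  nlinarith

theorem T_strictAntiOn_of_mem_Fmem {k : ι} (hk : k ∈ M.Fmem) :
    StrictAntiOn (M.T k) (Set.Iic (M.Bh / (M.Bh + M.Bg))) := by
  intro v hv w hw hvw
  rw [M.T_of_mem_Fmem_of_le hk hw, M.T_of_mem_Fmem_of_le hk hv]
  have := M.hBg
  have := M.hC k (M.mem_F_of_mem_Fmem hk)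
  gcongr

theorem T_monotone_of_notMem_Fmem {j : ι} (hj : j ∉ M.Fmem) (hCj : 0 ≤ M.Cd j) :
    Monotone (M.T j) := by
  intro v w hvw
  simp only [T, if_neg hj]
  have := M.hBh
  gcongr

theorem bandwidth_ratio_lt_one : M.Bh / (M.Bh + M.Bg) < 1 :=
  (div_lt_one (add_pos M.hBh M.hBg)).mpr (lt_add_of_pos_right _ M.hBg)

theorem not_optimal_of_L_lt {R : ℝ} {x y : ι → ℝ} (hy : M.Feasible R y) (hyx : M.L y < M.L x) :
    ¬ M.Optimal R x :=
  fun hopt => (hopt.2 y hy).not_gt hyx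

end OffloadModel

theorem stmt10_general (M : OffloadModel ι) (R : ℝ)
    (x : ι → ℝ) (hx : M.Feasible R x)
    (j k : ι) (hj : j ∈ M.Fcomp) (hk : k ∈ M.Fmem) (hjk : k ≠ j)
    (hxj : 0 < x j) (hxk : x k < M.Bh / (M.Bh + M.Bg)) :
    ¬ M.Optimal R x ∧ ∃ x', M.Feasible R x' ∧ M.L x' < M.L x := by
  have hjF := M.mem_F_of_mem_Fcomp hj
  have hkF := M.mem_F_of_mem_Fmem hk
  have hCj := M.hC j hjF
  have hCk := M.hC k hkF
  -- Move as much data as `j` holds, but not past the turning point of `k`.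
  set d := min (M.Cd j * x j) (M.Cd k * (M.Bh / (M.Bh + M.Bg) - x k))
  have hd : 0 < d := lt_min (by positivity) (mul_pos hCk (by linarith))
  have hdk : x k + d / M.Cd k ≤ M.Bh / (M.Bh + M.Bg) := by
    have : d / M.Cd k ≤ M.Bh / (M.Bh + M.Bg) - x k := by
      rw [div_le_iff₀' hCk]; exact min_le_right _ _
    linarith
  have hfeas : M.Feasible R (M.transfer x j k d) :=
    M.feasible_transfer hx hjF hkF hjk hd.le (min_le_left _ _)
      ((min_le_right _ _).trans (by gcongr; exact M.bandwidth_ratio_lt_one.le))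
  have hTj : M.T j (x j - d / M.Cd j) ≤ M.T j (x j) :=
    M.T_monotone_of_notMem_Fmem (M.notMem_Fmem_of_mem_Fcomp hj) hCj.le
      (by linarith [div_pos hd hCj])
  have hTk : M.T k (x k + d / M.Cd k) < M.T k (x k) :=
    M.T_strictAntiOn_of_mem_Fmem hk (hxk.le : x k ∈ Set.Iic _) hdk
      (by linarith [div_pos hd hCk])
  have hL : M.L (M.transfer x j k d) < M.L x := by
    rw [M.L_transfer hjF hkF hjk]; linarith
  exact ⟨M.not_optimal_of_L_lt hfeas hL, _, hfeas, hL⟩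

/-- Exchange lemma (compute-to-memory): if a feasible allocation `x` offloads a
positive amount from a compute-bound operation `j` while some memory-bound
operation `k ≠ j` is strictly below its turning point, then `x` is not optimal:
some feasible allocation `x'` for the same ratio has strictly smaller objective. -/
theorem stmt10 (M : OffloadModel ι) (R : ℝ) (hR0 : 0 ≤ R) (hR1 : R ≤ 1)
    (x : ι → ℝ) (hx : M.Feasible R x)
    (j k : ι) (hj : j ∈ M.Fcomp) (hk : k ∈ M.Fmem) (hjk : k ≠ j)
    (hxj : 0 < x j) (hxk : x k < M.Bh / (M.Bh + M.Bg)) :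
    ¬ M.Optimal R x ∧ ∃ x', M.Feasible R x' ∧ M.L x' < M.L x :=
  stmt10_general M R x hx j k hj hk hjk hxj hxk
end

section
/- (Theorem 2) Suppose Σ_{i∈F_mem} C_i·B_h/(B_h+B_g) < R·Σ_{i∈F} C_i ≤ Σ_{i∈F} C_i·x_i*. Then every feasible allocation x with x_i = B_h/(B_h+B_g) for all i ∈ F_mem and x_i ≤ B_h/B_i for all i ∈ F_comp is optimal, i.e. L(x) ≤ L(y) for every feasible allocation y. -/
open Finset

variable {ι : Type*} [DecidableEq ι]

/-- Theorem 2: if the budget exceeds the memory-bound turning points but fits within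
all turning points, then every feasible allocation pinning memory-bound ops at their
turning point and keeping compute-bound ops at or below theirs is optimal. -/
theorem stmt13 (M : OffloadModel ι) (R : ℝ) (hR0 : 0 ≤ R) (hR1 : R ≤ 1)
    (hlo : ∑ i ∈ M.Fmem, M.Cd i * (M.Bh / (M.Bh + M.Bg)) < R * ∑ i ∈ M.F, M.Cd i)
    (hhi : R * ∑ i ∈ M.F, M.Cd i ≤ ∑ i ∈ M.F, M.Cd i * M.turning i)
    (x : ι → ℝ) (hx : M.Feasible R x)
    (hmem : ∀ i ∈ M.Fmem, x i = M.Bh / (M.Bh + M.Bg))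
    (hcomp : ∀ i ∈ M.Fcomp, x i ≤ M.Bh / M.Bi i) :
    ∀ y, M.Feasible R y → M.L x ≤ M.L y := by
  intro y hy
  have hBh := M.hBh
  have hBg := M.hBg
  have hBhBg : (0:ℝ) < M.Bh + M.Bg := by linarith
  unfold OffloadModel.L
  apply Finset.sum_le_sum
  intro i hi
  unfold OffloadModel.T
  by_cases hm : i ∈ M.Fmem
  · rw [if_pos hm, if_pos hm]
    have hc := (M.hC i hi).le
    apply mul_le_mul_of_nonneg_left _ hc
    have hxi := hmem i hm
    have h1 : x i / M.Bh = 1 / (M.Bh + M.Bg) := by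
      rw [hxi]; field_simp
    have h2 : (1 - x i) / M.Bg = 1 / (M.Bh + M.Bg) := by
      rw [hxi]; field_simp; ring
    rw [h1, h2, max_self]
    rcases le_or_gt (1 / (M.Bh + M.Bg)) (y i / M.Bh) with h | h
    · exact le_max_of_le_left h
    · apply le_max_of_le_right
      rw [div_lt_div_iff₀ hBh hBhBg] at h
      rw [div_le_div_iff₀ hBhBg hBg]
      nlinarith
  · rw [if_neg hm, if_neg hm]
    have hcmp : i ∈ M.Fcomp := by
      have := M.hpart
      have hiF : i ∈ M.Fmem ∪ M.Fcomp := by rw [this]; exact hi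
      rcases Finset.mem_union.mp hiF with h | h
      · exact absurd h hm
      · exact h
    have hBi : M.Bh ≤ M.Bi i := M.hBi i hcmp
    have hBi0 : (0:ℝ) < M.Bi i := lt_of_lt_of_le hBh hBi
    have hc := (M.hC i hi).le
    apply mul_le_mul_of_nonneg_left _ hc
    have hxle : x i / M.Bh ≤ 1 / M.Bi i := by
      rw [div_le_div_iff₀ hBh hBi0]
      have := hcomp i hcmp
      rw [le_div_iff₀ hBi0] at this
      linarith
    rw [max_eq_left hxle]
    exact le_max_left _ _
end

section
/- (Exchange lemma, across turning points) Let x be a feasible allocation for ratio R, and suppose there exist operations j, k ∈ F with j ≠ k such that x_j < x_j* and x_k > x_k*. Then x is not optimal: there exists a feasible allocation x' for the same ratio R with L(x') < L(x). -/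
open Finset

variable {ι : Type*} [DecidableEq ι]

/-- Exchange lemma (across turning points): if a feasible allocation `x` has some
operation `j` strictly below its turning point and another operation `k ≠ j` strictly
above its turning point, then `x` is not optimal: some feasible allocation `x'` for
the same ratio has strictly smaller objective. -/
theorem stmt14 (M : OffloadModel ι) (R : ℝ) (hR0 : 0 ≤ R) (hR1 : R ≤ 1)
    (x : ι → ℝ) (hx : M.Feasible R x)
    (j k : ι) (hj : j ∈ M.F) (hk : k ∈ M.F) (hjk : j ≠ k)
    (hxj : x j < M.turning j) (hxk : M.turning k < x k) :
    ¬ M.Optimal R x ∧ ∃ x', M.Feasible R x' ∧ M.L x' < M.L x := by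
  obtain ⟨hbd, hsum⟩ := hx
  have hCj : 0 < M.Cd j := M.hC j hj
  have hCk : 0 < M.Cd k := M.hC k hk
  have hBh := M.hBh
  have hBg := M.hBg
  set ε : ℝ := min (M.Cd j * (M.turning j - x j)) (M.Cd k * (x k - M.turning k)) with hεdef
  have hε0 : 0 < ε := lt_min (by nlinarith) (by nlinarith)
  have hdivj : 0 < ε / M.Cd j := div_pos hε0 hCj
  have hdivk : 0 < ε / M.Cd k := div_pos hε0 hCk
  have hεj : ε / M.Cd j ≤ M.turning j - x j := by
    rw [div_le_iff₀ hCj]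
    calc ε ≤ M.Cd j * (M.turning j - x j) := min_le_left _ _
    _ = (M.turning j - x j) * M.Cd j := mul_comm _ _
  have hεk : ε / M.Cd k ≤ x k - M.turning k := by
    rw [div_le_iff₀ hCk]
    calc ε ≤ M.Cd k * (x k - M.turning k) := min_le_right _ _
    _ = (x k - M.turning k) * M.Cd k := mul_comm _ _
  set x' : ι → ℝ := fun i => if i = j then x j + ε / M.Cd j else if i = k then x k - ε / M.Cd k else x i with hx'def
  have hx'j : x' j = x j + ε / M.Cd j := by simp [hx'def]
  have hx'k : x' k = x k - ε / M.Cd k := by simp [hx'def, hjk.symm]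
  have hx'o : ∀ i, i ≠ j → i ≠ k → x' i = x i := by
    intro i h1 h2; simp [hx'def, h1, h2]
  have hjcases : j ∈ M.Fmem ∨ j ∈ M.Fcomp := by
    have : j ∈ M.Fmem ∪ M.Fcomp := by rw [M.hpart]; exact hj
    exact Finset.mem_union.mp this
  have hkcases : k ∈ M.Fmem ∨ k ∈ M.Fcomp := by
    have : k ∈ M.Fmem ∪ M.Fcomp := by rw [M.hpart]; exact hk
    exact Finset.mem_union.mp this
  have htj1 : M.turning j ≤ 1 := by
    unfold OffloadModel.turning
    rcases hjcases with h | h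
    · rw [if_pos h, div_le_one (by linarith)]; linarith
    · have hj' : j ∉ M.Fmem := fun hc => absurd (M.hdisj.forall_ne_finset hc h) (by simp)
      have hB := M.hBi j h
      rw [if_neg hj', div_le_one (by linarith)]; linarith
  have htk0 : 0 ≤ M.turning k := by
    unfold OffloadModel.turning
    rcases hkcases with h | h
    · rw [if_pos h]; positivity
    · have hk' : k ∉ M.Fmem := fun hc => absurd (M.hdisj.forall_ne_finset hc h) (by simp)
      have hB := M.hBi k h
      rw [if_neg hk']
      apply div_nonneg <;> linarith
  have hxj0 : 0 ≤ x j := (hbd j hj).1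
  have hxk1 : x k ≤ 1 := (hbd k hk).2
  have hx'jle : x' j ≤ M.turning j := by rw [hx'j]; linarith
  have hx'kge : M.turning k ≤ x' k := by rw [hx'k]; linarith
  have hx'jge : x j ≤ x' j := by rw [hx'j]; linarith
  have hx'klt : x' k < x k := by rw [hx'k]; linarith
  have hkj : k ∈ M.F.erase j := Finset.mem_erase.mpr ⟨hjk.symm, hk⟩
  -- feasibility of x'
  have hfeas : M.Feasible R x' := by
    constructor
    · intro i hi
      by_cases h1 : i = j
      · subst h1
        exact ⟨by linarith, by linarith⟩
      · by_cases h2 : i = k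
        · subst h2
          exact ⟨by linarith, by linarith⟩
        · rw [hx'o i h1 h2]; exact hbd i hi
    · have h1 : ∑ i ∈ M.F, M.Cd i * x' i
          = M.Cd j * x' j + (M.Cd k * x' k + ∑ i ∈ (M.F.erase j).erase k, M.Cd i * x' i) := by
        rw [← Finset.add_sum_erase _ (fun i => M.Cd i * x' i) hj,
          ← Finset.add_sum_erase _ (fun i => M.Cd i * x' i) hkj]
      have h2 : ∑ i ∈ M.F, M.Cd i * x i
          = M.Cd j * x j + (M.Cd k * x k + ∑ i ∈ (M.F.erase j).erase k, M.Cd i * x i) := by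
        rw [← Finset.add_sum_erase _ (fun i => M.Cd i * x i) hj,
          ← Finset.add_sum_erase _ (fun i => M.Cd i * x i) hkj]
      have hrest : ∑ i ∈ (M.F.erase j).erase k, M.Cd i * x' i
          = ∑ i ∈ (M.F.erase j).erase k, M.Cd i * x i := by
        apply Finset.sum_congr rfl
        intro i hi
        have ha := Finset.mem_erase.mp hi
        have hb := Finset.mem_erase.mp ha.2
        rw [hx'o i hb.1 ha.1]
      rw [h1, hrest, hx'j, hx'k, mul_add, mul_sub,
        mul_div_cancel₀ _ (ne_of_gt hCj), mul_div_cancel₀ _ (ne_of_gt hCk)]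
      rw [h2] at hsum
      linarith
  -- objective decrease at j
  have hTj : M.T j (x' j) ≤ M.T j (x j) := by
    unfold OffloadModel.T
    rcases hjcases with h | h
    · rw [if_pos h, if_pos h]
      have key : ∀ y : ℝ, y ≤ M.turning j → max (y / M.Bh) ((1 - y) / M.Bg) = (1 - y) / M.Bg := by
        intro y hy
        apply max_eq_right
        rw [div_le_div_iff₀ hBh hBg]
        have ht : M.turning j = M.Bh / (M.Bh + M.Bg) := by
          unfold OffloadModel.turning; rw [if_pos h]
        rw [ht, le_div_iff₀ (by linarith)] at hy
        nlinarith
      rw [key _ hx'jle, key _ hxj.le, div_eq_mul_inv, div_eq_mul_inv]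
      have hi : 0 < M.Bg⁻¹ := inv_pos.mpr hBg
      apply mul_le_mul_of_nonneg_left _ hCj.le
      exact mul_le_mul_of_nonneg_right (by linarith) hi.le
    · have hj' : j ∉ M.Fmem := fun hc => absurd (M.hdisj.forall_ne_finset hc h) (by simp)
      rw [if_neg hj', if_neg hj']
      have hBij : M.Bh ≤ M.Bi j := M.hBi j h
      have hBij0 : 0 < M.Bi j := by linarith
      have key : ∀ y : ℝ, y ≤ M.turning j → max (1 / M.Bi j) (y / M.Bh) = 1 / M.Bi j := by
        intro y hy
        apply max_eq_left
        rw [div_le_div_iff₀ hBh hBij0]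
        have ht : M.turning j = M.Bh / M.Bi j := by
          unfold OffloadModel.turning; rw [if_neg hj']
        rw [ht, le_div_iff₀ hBij0] at hy
        linarith
      rw [key _ hx'jle, key _ hxj.le]
  -- strict objective decrease at k
  have hTk : M.T k (x' k) < M.T k (x k) := by
    unfold OffloadModel.T
    rcases hkcases with h | h
    · rw [if_pos h, if_pos h]
      have key : ∀ y : ℝ, M.turning k ≤ y → max (y / M.Bh) ((1 - y) / M.Bg) = y / M.Bh := by
        intro y hy
        apply max_eq_left
        rw [div_le_div_iff₀ hBg hBh]
        have ht : M.turning k = M.Bh / (M.Bh + M.Bg) := by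
          unfold OffloadModel.turning; rw [if_pos h]
        rw [ht, div_le_iff₀ (by linarith)] at hy
        nlinarith
      rw [key _ hx'kge, key _ hxk.le, div_eq_mul_inv, div_eq_mul_inv]
      have hi : 0 < M.Bh⁻¹ := inv_pos.mpr hBh
      exact mul_lt_mul_of_pos_left (mul_lt_mul_of_pos_right hx'klt hi) hCk
    · have hk' : k ∉ M.Fmem := fun hc => absurd (M.hdisj.forall_ne_finset hc h) (by simp)
      rw [if_neg hk', if_neg hk']
      have hBik : M.Bh ≤ M.Bi k := M.hBi k h
      have hBik0 : 0 < M.Bi k := by linarith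
      have key : ∀ y : ℝ, M.turning k ≤ y → max (1 / M.Bi k) (y / M.Bh) = y / M.Bh := by
        intro y hy
        apply max_eq_right
        rw [div_le_div_iff₀ hBik0 hBh]
        have ht : M.turning k = M.Bh / M.Bi k := by
          unfold OffloadModel.turning; rw [if_neg hk']
        rw [ht, div_le_iff₀ hBik0] at hy
        linarith
      rw [key _ hx'kge, key _ hxk.le, div_eq_mul_inv, div_eq_mul_inv]
      have hi : 0 < M.Bh⁻¹ := inv_pos.mpr hBh
      exact mul_lt_mul_of_pos_left (mul_lt_mul_of_pos_right hx'klt hi) hCk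
  have hLlt : M.L x' < M.L x := by
    unfold OffloadModel.L
    have h1 : ∑ i ∈ M.F, M.T i (x' i)
        = M.T j (x' j) + (M.T k (x' k) + ∑ i ∈ (M.F.erase j).erase k, M.T i (x' i)) := by
      rw [← Finset.add_sum_erase _ (fun i => M.T i (x' i)) hj,
        ← Finset.add_sum_erase _ (fun i => M.T i (x' i)) hkj]
    have h2 : ∑ i ∈ M.F, M.T i (x i)
        = M.T j (x j) + (M.T k (x k) + ∑ i ∈ (M.F.erase j).erase k, M.T i (x i)) := by
      rw [← Finset.add_sum_erase _ (fun i => M.T i (x i)) hj,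
        ← Finset.add_sum_erase _ (fun i => M.T i (x i)) hkj]
    have hrest : ∑ i ∈ (M.F.erase j).erase k, M.T i (x' i)
        = ∑ i ∈ (M.F.erase j).erase k, M.T i (x i) := by
      apply Finset.sum_congr rfl
      intro i hi
      have ha := Finset.mem_erase.mp hi
      have hb := Finset.mem_erase.mp ha.2
      rw [hx'o i hb.1 ha.1]
    rw [h1, h2, hrest]
    linarith
  refine ⟨fun hopt => absurd (hopt.2 x' hfeas) (not_le.mpr hLlt), x', hfeas, hLlt⟩
end

section
/- (Theorem 3, structure of optima) Suppose R·Σ_{i∈F} C_i > Σ_{i∈F} C_i·x_i*. Then every optimal feasible allocation x satisfies x_i ≥ x_i* for all i ∈ F. -/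
open Finset

variable {ι : Type*} [DecidableEq ι]

lemma aux_Bi_pos (M : OffloadModel ι) {i : ι} (hiF : i ∈ M.F) (hi : i ∉ M.Fmem) :
    0 < M.Bi i := by
  have hc : i ∈ M.Fcomp := by
    have := M.hpart ▸ hiF
    rcases Finset.mem_union.mp this with h | h
    · exact absurd h hi
    · exact h
  exact lt_of_lt_of_le M.hBh (M.hBi i hc)

lemma aux_turn_nonneg (M : OffloadModel ι) {i : ι} (hiF : i ∈ M.F) :
    0 ≤ M.turning i := by
  unfold OffloadModel.turning
  split
  · exact le_of_lt (div_pos M.hBh (by linarith [M.hBh, M.hBg]))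
  · next h => exact le_of_lt (div_pos M.hBh (aux_Bi_pos M hiF h))

lemma aux_turn_le_one (M : OffloadModel ι) {i : ι} (hiF : i ∈ M.F) :
    M.turning i ≤ 1 := by
  unfold OffloadModel.turning
  split
  · rw [div_le_one (by linarith [M.hBh, M.hBg])]
    linarith [M.hBg]
  · next h =>
    have hc : i ∈ M.Fcomp := by
      have := M.hpart ▸ hiF
      rcases Finset.mem_union.mp this with h' | h'
      · exact absurd h' h
      · exact h'
    rw [div_le_one (aux_Bi_pos M hiF h)]
    exact M.hBi i hc

lemma aux_T_of_ge (M : OffloadModel ι) {i : ι} (hiF : i ∈ M.F) {a : ℝ}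
    (ha : M.turning i ≤ a) : M.T i a = M.Cd i * (a / M.Bh) := by
  unfold OffloadModel.T
  unfold OffloadModel.turning at ha
  split
  · next h =>
    rw [if_pos h] at ha
    congr 1
    rw [max_eq_left]
    rw [div_le_div_iff₀ M.hBg M.hBh]
    have := (div_le_iff₀ (by linarith [M.hBh, M.hBg])).mp ha
    nlinarith
  · next h =>
    rw [if_neg h] at ha
    have hBi := aux_Bi_pos M hiF h
    congr 1
    rw [max_eq_right]
    rw [div_le_div_iff₀ hBi M.hBh]
    have := (div_le_iff₀ hBi).mp ha
    nlinarith

lemma aux_T_mono (M : OffloadModel ι) {i : ι} (hiF : i ∈ M.F) {a b : ℝ}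
    (hab : a ≤ b) (hb : b ≤ M.turning i) : M.T i b ≤ M.T i a := by
  have hCi := M.hC i hiF
  unfold OffloadModel.T
  unfold OffloadModel.turning at hb
  split
  · next h =>
    rw [if_pos h] at hb
    have h1 : b / M.Bh ≤ (1 - b) / M.Bg := by
      rw [div_le_div_iff₀ M.hBh M.hBg]
      have := (le_div_iff₀ (by linarith [M.hBh, M.hBg])).mp hb
      nlinarith
    rw [max_eq_right h1]
    have h2 : (1 - b) / M.Bg ≤ (1 - a) / M.Bg := by
      rw [div_le_div_iff₀ M.hBg M.hBg]
      nlinarith [M.hBg]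
    calc M.Cd i * ((1 - b) / M.Bg) ≤ M.Cd i * ((1 - a) / M.Bg) := by
          exact mul_le_mul_of_nonneg_left h2 (le_of_lt hCi)
      _ ≤ M.Cd i * max (a / M.Bh) ((1 - a) / M.Bg) := by
          exact mul_le_mul_of_nonneg_left (le_max_right _ _) (le_of_lt hCi)
  · next h =>
    rw [if_neg h] at hb
    have hBi := aux_Bi_pos M hiF h
    have h1 : b / M.Bh ≤ 1 / M.Bi i := by
      rw [div_le_div_iff₀ M.hBh hBi]
      have := (le_div_iff₀ hBi).mp hb
      nlinarith
    rw [max_eq_left h1]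
    exact mul_le_mul_of_nonneg_left (le_max_left _ _) (le_of_lt hCi)

/-- Theorem 3 (structure of optima): if the budget strictly exceeds the total of all
turning points, every optimal feasible allocation has `x i ≥ turning i` for all `i ∈ F`. -/
theorem stmt15 (M : OffloadModel ι) (R : ℝ) (hR0 : 0 ≤ R) (hR1 : R ≤ 1)
    (hbudget : ∑ i ∈ M.F, M.Cd i * M.turning i < R * ∑ i ∈ M.F, M.Cd i)
    (x : ι → ℝ) (hopt : M.Optimal R x) :
    ∀ i ∈ M.F, M.turning i ≤ x i := by
  by_contra hcon
  push_neg at hcon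
  obtain ⟨j, hjF, hj⟩ := hcon
  have hsum : ∑ i ∈ M.F, M.Cd i * M.turning i < ∑ i ∈ M.F, M.Cd i * x i := by
    rw [hopt.1.2]; exact hbudget
  have hex : ∃ k ∈ M.F, M.turning k < x k := by
    by_contra hk
    push_neg at hk
    have : ∑ i ∈ M.F, M.Cd i * x i ≤ ∑ i ∈ M.F, M.Cd i * M.turning i :=
      Finset.sum_le_sum fun i hi =>
        mul_le_mul_of_nonneg_left (hk i hi) (le_of_lt (M.hC i hi))
    linarith
  obtain ⟨k, hkF, hkx⟩ := hex
  have hjk : j ≠ k := fun e => by subst e; linarith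
  have hCj := M.hC j hjF
  have hCk := M.hC k hkF
  set δ : ℝ := min (x k - M.turning k) (M.Cd j / M.Cd k * (M.turning j - x j)) with hδdef
  have hδ : 0 < δ := lt_min (by linarith) (mul_pos (div_pos hCj hCk) (by linarith))
  set c : ℝ := M.Cd k / M.Cd j * δ with hcdef
  have hc : 0 < c := by positivity
  have hCeq : M.Cd j * c = M.Cd k * δ := by
    rw [hcdef]
    field_simp
  have hδ1 : δ ≤ x k - M.turning k := min_le_left _ _
  have hδ2 : δ ≤ M.Cd j / M.Cd k * (M.turning j - x j) := min_le_right _ _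
  have hcle : x j + c ≤ M.turning j := by
    have : c ≤ M.turning j - x j := by
      rw [hcdef]
      calc M.Cd k / M.Cd j * δ ≤ M.Cd k / M.Cd j * (M.Cd j / M.Cd k * (M.turning j - x j)) :=
            mul_le_mul_of_nonneg_left hδ2 (by positivity)
        _ = M.turning j - x j := by field_simp
    linarith
  have hkge : M.turning k ≤ x k - δ := by linarith
  set y : ι → ℝ := fun i => if i = j then x j + c else if i = k then x k - δ else x i with hydef
  have hyj : y j = x j + c := by simp [hydef]
  have hyk : y k = x k - δ := by simp [hydef, hjk.symm]
  have hyother : ∀ i, i ≠ j → i ≠ k → y i = x i := by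
    intro i h1 h2; simp [hydef, h1, h2]
  have hxj := hopt.1.1 j hjF
  have hxk := hopt.1.1 k hkF
  have hsub : ({j, k} : Finset ι) ⊆ M.F := by
    intro i hi
    rcases Finset.mem_insert.mp hi with h | h
    · exact h ▸ hjF
    · exact (Finset.mem_singleton.mp h) ▸ hkF
  have hdiff : ∀ (f : ι → ℝ) (hf : ∀ i, i ≠ j → i ≠ k → f i = 0),
      ∑ i ∈ M.F, f i = f j + f k := by
    intro f hf
    rw [← Finset.sum_subset hsub (fun i _ hni => by
      simp only [Finset.mem_insert, Finset.mem_singleton] at hni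
      push_neg at hni
      exact hf i hni.1 hni.2)]
    rw [Finset.sum_pair hjk]
  have hfeas : M.Feasible R y := by
    constructor
    · intro i hiF
      by_cases h1 : i = j
      · subst h1
        rw [hyj]
        constructor
        · linarith [hxj.1]
        · linarith [aux_turn_le_one M hjF]
      · by_cases h2 : i = k
        · subst h2
          rw [hyk]
          constructor
          · linarith [aux_turn_nonneg M hkF]
          · linarith [hxk.2]
        · rw [hyother i h1 h2]; exact hopt.1.1 i hiF
    · have hkey : ∑ i ∈ M.F, (M.Cd i * y i - M.Cd i * x i) = 0 := by
        rw [hdiff _ (fun i h1 h2 => by rw [hyother i h1 h2]; ring)]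
        rw [hyj, hyk]
        nlinarith [hCeq]
      have := Finset.sum_sub_distrib (s := M.F) (f := fun i => M.Cd i * y i)
        (g := fun i => M.Cd i * x i)
      rw [← hopt.1.2]
      linarith [hkey, this]
  have hLj : M.T j (y j) ≤ M.T j (x j) := by
    rw [hyj]
    exact aux_T_mono M hjF (by linarith) hcle
  have hLk : M.T k (y k) < M.T k (x k) := by
    rw [hyk, aux_T_of_ge M hkF hkge, aux_T_of_ge M hkF (le_of_lt hkx)]
    have h1 : (x k - δ) / M.Bh < x k / M.Bh :=
      div_lt_div_of_pos_right (by linarith) M.hBh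
    exact mul_lt_mul_of_pos_left h1 hCk
  have hLlt : M.L y < M.L x := by
    have hkey : ∑ i ∈ M.F, (M.T i (y i) - M.T i (x i)) < 0 := by
      rw [hdiff _ (fun i h1 h2 => by rw [hyother i h1 h2]; ring)]
      linarith
    have := Finset.sum_sub_distrib (s := M.F) (f := fun i => M.T i (y i))
      (g := fun i => M.T i (x i))
    unfold OffloadModel.L
    linarith [hkey, this]
  exact absurd (hopt.2 y hfeas) (not_le.mpr hLlt)
end

section
/- (Theorem 3, constancy and optimality) Suppose R·Σ_{i∈F} C_i ≥ Σ_{i∈F} C_i·x_i*. Then every feasible allocation x with x_i ≥ x_i* for all i ∈ F has objective value L(x) = R·(Σ_{i∈F} C_i)/B_h, and every such allocation is optimal, i.e. L(x) ≤ L(y) for every feasible allocation y; in particular the allocation of the remaining budget among operations beyond their turning points does not affect the objective value. -/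
open Finset

variable {ι : Type*} [DecidableEq ι]

/-- Theorem 3 (constancy and optimality): if the budget is at least the total of all
turning points, every feasible allocation with `x i ≥ turning i` for all `i ∈ F` has
objective value `R * (∑_F C i) / Bh` and is optimal; in particular the allocation of
the remaining budget beyond the turning points does not affect the objective. -/
theorem stmt16 (M : OffloadModel ι) (R : ℝ) (hR0 : 0 ≤ R) (hR1 : R ≤ 1)
    (hbudget : ∑ i ∈ M.F, M.Cd i * M.turning i ≤ R * ∑ i ∈ M.F, M.Cd i)
    (x : ι → ℝ) (hx : M.Feasible R x) (hge : ∀ i ∈ M.F, M.turning i ≤ x i) :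
    M.L x = R * (∑ i ∈ M.F, M.Cd i) / M.Bh ∧
    ∀ y, M.Feasible R y → M.L x ≤ M.L y := by
  have hBh := M.hBh
  have hval : M.L x = R * (∑ i ∈ M.F, M.Cd i) / M.Bh := by
    have key : ∀ i ∈ M.F, M.T i (x i) = M.Cd i * (x i / M.Bh) := by
      intro i hi
      have ht := hge i hi
      by_cases hm : i ∈ M.Fmem
      · simp only [OffloadModel.turning, if_pos hm] at ht
        simp only [OffloadModel.T, if_pos hm]
        congr 1
        have hsum : 0 < M.Bh + M.Bg := by linarith [M.hBg]
        rw [div_le_iff₀ hsum] at ht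
        rw [max_eq_left]
        rw [div_le_div_iff₀ M.hBg hBh]
        nlinarith
      · have hc : i ∈ M.Fcomp := by
          have hi' : i ∈ M.Fmem ∪ M.Fcomp := M.hpart ▸ hi
          rcases Finset.mem_union.mp hi' with h | h
          · exact absurd h hm
          · exact h
        have hBi : 0 < M.Bi i := lt_of_lt_of_le hBh (M.hBi i hc)
        simp only [OffloadModel.turning, if_neg hm] at ht
        simp only [OffloadModel.T, if_neg hm]
        congr 1
        rw [div_le_iff₀ hBi] at ht
        rw [max_eq_right]
        rw [div_le_div_iff₀ hBi hBh]
        nlinarith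
    rw [OffloadModel.L, Finset.sum_congr rfl key]
    have : ∑ i ∈ M.F, M.Cd i * (x i / M.Bh) = (∑ i ∈ M.F, M.Cd i * x i) / M.Bh := by
      simp [Finset.sum_div, mul_div_assoc]
    rw [this, hx.2]
  refine ⟨hval, fun y hy => ?_⟩
  have hlb : R * (∑ i ∈ M.F, M.Cd i) / M.Bh ≤ M.L y := by
    have key : ∀ i ∈ M.F, M.Cd i * (y i / M.Bh) ≤ M.T i (y i) := by
      intro i hi
      have hC := (M.hC i hi).le
      by_cases hm : i ∈ M.Fmem <;>
        simp only [OffloadModel.T, hm, if_true, if_false] <;>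
        exact mul_le_mul_of_nonneg_left (by first | exact le_max_left _ _ | exact le_max_right _ _) hC
    calc R * (∑ i ∈ M.F, M.Cd i) / M.Bh
        = ∑ i ∈ M.F, M.Cd i * (y i / M.Bh) := by
          rw [← hy.2]
          simp [Finset.sum_div, mul_div_assoc]
      _ ≤ M.L y := Finset.sum_le_sum key
  rw [hval]; exact hlb
end

section
/- (Suboptimality of uniform offloading, Region 1) Suppose F_mem and F_comp are both nonempty, and let r be a real with 0 < r < B_h/(B_h+B_g). Then the uniform allocation x with x_i = r for all i ∈ F, which is feasible for the global ratio R = r, is not optimal: there exists a feasible allocation x' for ratio R = r with L(x') < L(x). -/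
open Finset

variable {ι : Type*} [DecidableEq ι]

/-- Suboptimality of uniform offloading (Region 1): if both `Fmem` and `Fcomp` are
nonempty and `0 < r < Bh/(Bh+Bg)`, then the uniform allocation `x i = r` is feasible
for `R = r` but not optimal: some feasible allocation has strictly smaller objective. -/
theorem stmt17 (M : OffloadModel ι)
    (hmem : M.Fmem.Nonempty) (hcomp : M.Fcomp.Nonempty)
    (r : ℝ) (hr0 : 0 < r) (hr1 : r < M.Bh / (M.Bh + M.Bg)) :
    M.Feasible r (fun _ => r) ∧
    ∃ x', M.Feasible r x' ∧ M.L x' < M.L (fun _ => r) := by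
  obtain ⟨j, hj⟩ := hmem
  obtain ⟨k, hk⟩ := hcomp
  have hjF : j ∈ M.F := M.hpart ▸ Finset.mem_union_left _ hj
  have hkF : k ∈ M.F := M.hpart ▸ Finset.mem_union_right _ hk
  have hknm : k ∉ M.Fmem := Finset.disjoint_right.mp M.hdisj hk
  have hjk : j ≠ k := fun h => hknm (h ▸ hj)
  have hBh := M.hBh
  have hBg := M.hBg
  have hBhg : (0:ℝ) < M.Bh + M.Bg := by linarith
  set t : ℝ := M.Bh / (M.Bh + M.Bg) with ht
  have htlt1 : t < 1 := (div_lt_one hBhg).mpr (by linarith)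
  have hCj : 0 < M.Cd j := M.hC j hjF
  have hCk : 0 < M.Cd k := M.hC k hkF
  have hrt : r < t := hr1
  set δ : ℝ := min (M.Cd j * (t - r)) (M.Cd k * r) with hδ
  have hδpos : 0 < δ := lt_min (mul_pos hCj (by linarith)) (mul_pos hCk hr0)
  have haj : δ / M.Cd j ≤ t - r := (div_le_iff₀ hCj).mpr (by
    rw [mul_comm]; exact min_le_left _ _)
  have hak : δ / M.Cd k ≤ r := (div_le_iff₀ hCk).mpr (by
    rw [mul_comm]; exact min_le_right _ _)
  have hajpos : 0 < δ / M.Cd j := div_pos hδpos hCj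
  have hakpos : 0 < δ / M.Cd k := div_pos hδpos hCk
  set x' : ι → ℝ := fun i => if i = j then r + δ / M.Cd j else if i = k then r - δ / M.Cd k else r with hx'
  have hx'j : x' j = r + δ / M.Cd j := by simp [hx']
  have hx'k : x' k = r - δ / M.Cd k := by simp [hx', hjk.symm]
  have hx'o : ∀ i, i ≠ j → i ≠ k → x' i = r := by
    intro i h1 h2; simp [hx', h1, h2]
  have hk' : k ∈ M.F.erase j := Finset.mem_erase.mpr ⟨hjk.symm, hkF⟩
  -- feasibility of uniform
  have hunif : M.Feasible r (fun _ => r) := by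
    constructor
    · intro i _; exact ⟨le_of_lt hr0, by linarith⟩
    · rw [← Finset.sum_mul, mul_comm]
  -- helper: decompose a sum over F at j and k
  have hdecomp : ∀ f : ι → ℝ, ∑ i ∈ M.F, f i
      = ∑ i ∈ (M.F.erase j).erase k, f i + f k + f j := by
    intro f
    rw [← Finset.sum_erase_add M.F f hjF, ← Finset.sum_erase_add (M.F.erase j) f hk']
  have hmemso : ∀ i ∈ (M.F.erase j).erase k, i ≠ j ∧ i ≠ k := by
    intro i hi
    have h2 := Finset.mem_erase.mp hi
    have h3 := Finset.mem_erase.mp h2.2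
    exact ⟨h3.1, h2.1⟩
  -- feasibility of x'
  have hfeas : M.Feasible r x' := by
    constructor
    · intro i _
      by_cases h1 : i = j
      · subst h1; rw [hx'j]; constructor <;> nlinarith
      by_cases h2 : i = k
      · subst h2; rw [hx'k]; constructor <;> nlinarith
      · rw [hx'o i h1 h2]; exact ⟨le_of_lt hr0, by linarith⟩
    · rw [hdecomp (fun i => M.Cd i * x' i), hx'j, hx'k]
      have heq1 : ∑ i ∈ (M.F.erase j).erase k, M.Cd i * x' i
          = ∑ i ∈ (M.F.erase j).erase k, M.Cd i * r := by
        apply Finset.sum_congr rfl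
        intro i hi
        obtain ⟨h1, h2⟩ := hmemso i hi
        rw [hx'o i h1 h2]
      rw [heq1]
      have hsum := hdecomp (fun i => M.Cd i * r)
      have hCj' : M.Cd j ≠ 0 := ne_of_gt hCj
      have hCk' : M.Cd k ≠ 0 := ne_of_gt hCk
      have e1 : M.Cd k * (r - δ / M.Cd k) = M.Cd k * r - δ := by
        field_simp
      have e2 : M.Cd j * (r + δ / M.Cd j) = M.Cd j * r + δ := by
        field_simp
      rw [e1, e2]
      have hms : ∑ i ∈ M.F, M.Cd i * r = r * ∑ i ∈ M.F, M.Cd i := by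
        rw [← Finset.sum_mul, mul_comm]
      rw [← hms, hsum]
      ring
  refine ⟨hunif, x', hfeas, ?_⟩
  -- key latency facts
  have hmaxlem : ∀ x : ℝ, x ≤ t → max (x / M.Bh) ((1 - x) / M.Bg) = (1 - x) / M.Bg := by
    intro x hx
    apply max_eq_right
    rw [div_le_div_iff₀ hBh hBg]
    have hb : x * (M.Bh + M.Bg) ≤ M.Bh := by
      rw [ht] at hx
      calc x * (M.Bh + M.Bg) ≤ (M.Bh / (M.Bh + M.Bg)) * (M.Bh + M.Bg) :=
            mul_le_mul_of_nonneg_right hx (le_of_lt hBhg)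
        _ = M.Bh := by field_simp
    nlinarith
  have hTj : M.T j (x' j) < M.T j r := by
    rw [OffloadModel.T, OffloadModel.T, if_pos hj, if_pos hj,
      hmaxlem _ (by rw [hx'j]; linarith), hmaxlem _ (le_of_lt hrt)]
    apply mul_lt_mul_of_pos_left _ hCj
    rw [hx'j]
    gcongr <;> linarith
  have hTk : M.T k (x' k) ≤ M.T k r := by
    rw [OffloadModel.T, OffloadModel.T, if_neg hknm, if_neg hknm]
    apply mul_le_mul_of_nonneg_left _ (le_of_lt hCk)
    apply max_le_max le_rfl
    rw [hx'k]
    gcongr <;> linarith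
  show M.L x' < M.L (fun _ => r)
  rw [OffloadModel.L, OffloadModel.L, hdecomp (fun i => M.T i (x' i)),
    hdecomp (fun i => M.T i r)]
  have heq : ∑ i ∈ (M.F.erase j).erase k, M.T i (x' i)
      = ∑ i ∈ (M.F.erase j).erase k, M.T i r := by
    apply Finset.sum_congr rfl
    intro i hi
    obtain ⟨h1, h2⟩ := hmemso i hi
    rw [hx'o i h1 h2]
  rw [heq]
  linarith
end

section
/- (Suboptimality of uniform offloading, Region 2) Suppose F_mem is nonempty, and let r be a real with B_h/(B_h+B_g) < r ≤ 1 such that there exists a compute-bound operation j ∈ F_comp with r < B_h/B_j. Then the uniform allocation x with x_i = r for all i ∈ F, which is feasible for the global ratio R = r, is not optimal: there exists a feasible allocation x' for ratio R = r with L(x') < L(x). -/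
open Finset

variable {ι : Type*} [DecidableEq ι]

/-- Suboptimality of uniform offloading (Region 2): if `Fmem` is nonempty,
`Bh/(Bh+Bg) < r ≤ 1`, and some compute-bound operation `j` has `r < Bh / Bi j`, then
the uniform allocation `x i = r` is feasible for `R = r` but not optimal: some
feasible allocation has strictly smaller objective. -/
theorem stmt18 (M : OffloadModel ι)
    (hmem : M.Fmem.Nonempty)
    (r : ℝ) (hr1 : M.Bh / (M.Bh + M.Bg) < r) (hr2 : r ≤ 1)
    (j : ι) (hj : j ∈ M.Fcomp) (hrj : r < M.Bh / M.Bi j) :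
    M.Feasible r (fun _ => r) ∧
    ∃ x', M.Feasible r x' ∧ M.L x' < M.L (fun _ => r) := by
  obtain ⟨k, hk⟩ := hmem
  have hkF : k ∈ M.F := by rw [← M.hpart]; exact Finset.mem_union_left _ hk
  have hjF : j ∈ M.F := by rw [← M.hpart]; exact Finset.mem_union_right _ hj
  have hjmem : j ∉ M.Fmem := Finset.disjoint_right.mp M.hdisj hj
  have hjk : j ≠ k := fun h => hjmem (h ▸ hk)
  have hBij : 0 < M.Bi j := lt_of_lt_of_le M.hBh (M.hBi j hj)
  have hCk : 0 < M.Cd k := M.hC k hkF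
  have hCj : 0 < M.Cd j := M.hC j hjF
  set t := M.Bh / (M.Bh + M.Bg) with ht_def
  have ht : 0 < t := div_pos M.hBh (by linarith [M.hBh, M.hBg])
  have hr0 : 0 < r := lt_trans ht hr1
  set ε := min (r - t) ((M.Bh / M.Bi j - r) * M.Cd j / M.Cd k) with hε_def
  have hε : 0 < ε :=
    lt_min (by linarith) (div_pos (mul_pos (by linarith) hCj) hCk)
  have hεrt : ε ≤ r - t := min_le_left _ _
  set δ := ε * M.Cd k / M.Cd j with hδ_def
  have hδ : 0 < δ := div_pos (mul_pos hε hCk) hCj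
  have hδle : δ ≤ M.Bh / M.Bi j - r := by
    rw [hδ_def, div_le_iff₀ hCj]
    have h1 : ε ≤ (M.Bh / M.Bi j - r) * M.Cd j / M.Cd k := min_le_right _ _
    have h2 : ε * M.Cd k ≤ (M.Bh / M.Bi j - r) * M.Cd j / M.Cd k * M.Cd k :=
      mul_le_mul_of_nonneg_right h1 hCk.le
    rwa [div_mul_cancel₀ _ hCk.ne'] at h2
  have hBij1 : M.Bh / M.Bi j ≤ 1 := div_le_one_of_le₀ (M.hBi j hj) hBij.le
  -- memory-bound latency formula on [t, 1]
  have hTmem : ∀ x : ℝ, t ≤ x → M.T k x = M.Cd k * (x / M.Bh) := by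
    intro x hx
    have hBx : M.Bh ≤ x * (M.Bh + M.Bg) := by
      rw [ht_def, div_le_iff₀ (by linarith [M.hBh, M.hBg])] at hx
      linarith
    have : (1 - x) / M.Bg ≤ x / M.Bh := by
      rw [div_le_div_iff₀ M.hBg M.hBh]; nlinarith
    rw [OffloadModel.T, if_pos hk, max_eq_left this]
  -- compute-bound latency formula on [0, Bh/Bi j]
  have hTcomp : ∀ x : ℝ, x ≤ M.Bh / M.Bi j → M.T j x = M.Cd j * (1 / M.Bi j) := by
    intro x hx
    have h1 : x * M.Bi j ≤ M.Bh := (le_div_iff₀ hBij).mp hx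
    have : x / M.Bh ≤ 1 / M.Bi j := by
      rw [div_le_div_iff₀ M.hBh hBij]; nlinarith
    rw [OffloadModel.T, if_neg hjmem, max_eq_left this]
  -- the improved allocation
  set x' : ι → ℝ := fun i => if i = k then r - ε else if i = j then r + δ else r
    with hx'_def
  have hx'k : x' k = r - ε := by simp [hx'_def]
  have hx'j : x' j = r + δ := by simp [hx'_def, hjk]
  have hx'other : ∀ i, i ≠ k → i ≠ j → x' i = r := by
    intro i h1 h2; simp [hx'_def, h1, h2]
  -- splitting sums
  have hjFk : j ∈ M.F.erase k := Finset.mem_erase.mpr ⟨hjk, hjF⟩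
  have hsplit : ∀ g : ι → ℝ,
      ∑ i ∈ M.F, g i = g k + g j + ∑ i ∈ (M.F.erase k).erase j, g i := by
    intro g
    rw [← Finset.add_sum_erase _ g hkF, ← Finset.add_sum_erase _ g hjFk]
    ring
  have hmemrest : ∀ i ∈ (M.F.erase k).erase j, x' i = r := by
    intro i hi
    have h2 := Finset.mem_erase.mp hi
    have h1 := Finset.mem_erase.mp h2.2
    exact hx'other i h1.1 h2.1
  have hfeas_unif : M.Feasible r (fun _ => r) := by
    constructor
    · intro i _; exact ⟨hr0.le, hr2⟩
    · rw [Finset.mul_sum]; exact Finset.sum_congr rfl fun i _ => mul_comm _ _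
  refine ⟨hfeas_unif, x', ⟨?_, ?_⟩, ?_⟩
  · -- bounds
    intro i hiF
    rcases eq_or_ne i k with rfl | hik
    · rw [hx'k]; constructor <;> linarith
    rcases eq_or_ne i j with rfl | hij
    · rw [hx'j]; constructor <;> linarith
    · rw [hx'other i hik hij]; exact ⟨hr0.le, hr2⟩
  · -- sum constraint
    rw [hsplit (fun i => M.Cd i * x' i), hsplit (fun i => M.Cd i)]
    rw [Finset.sum_congr rfl (fun i hi => by rw [hmemrest i hi])]
    have hcancel : M.Cd j * δ = M.Cd k * ε := by
      rw [hδ_def]; field_simp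
    have hs : ∑ i ∈ (M.F.erase k).erase j, M.Cd i * r
        = (∑ i ∈ (M.F.erase k).erase j, M.Cd i) * r := (Finset.sum_mul _ _ _).symm
    rw [hx'k, hx'j, hs]; nlinarith [hcancel]
  · -- strict improvement
    unfold OffloadModel.L
    rw [hsplit (fun i => M.T i (x' i)), hsplit (fun i => M.T i r)]
    have hrest : ∑ i ∈ (M.F.erase k).erase j, M.T i (x' i)
        = ∑ i ∈ (M.F.erase k).erase j, M.T i r :=
      Finset.sum_congr rfl fun i hi => by rw [hmemrest i hi]
    rw [hx'k, hx'j, hrest]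
    have e1 : M.T k (r - ε) = M.Cd k * ((r - ε) / M.Bh) := hTmem _ (by linarith)
    have e2 : M.T k r = M.Cd k * (r / M.Bh) := hTmem _ (le_of_lt hr1)
    have e3 : M.T j (r + δ) = M.Cd j * (1 / M.Bi j) := hTcomp _ (by linarith)
    have e4 : M.T j r = M.Cd j * (1 / M.Bi j) := hTcomp _ (le_of_lt hrj)
    rw [e1, e2, e3, e4]
    have hlt : (r - ε) / M.Bh < r / M.Bh := (div_lt_div_iff_of_pos_right M.hBh).mpr (by linarith)
    nlinarith [mul_lt_mul_of_pos_left hlt hCk]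
end
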